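/- arXiv:2508.14017 — 2 statements merged into one kernel-verified Lean document; each statement's English description precedes it below -/
import Mathlib

section
/- Let x⊤, x⊥ : ℝ → ℝ be differentiable functions with x⊥(t) ≠ 0 for all t, and suppose (x⊤)' = p⁺·x⊥ − γ·x⊤ and (x⊥)' = p⁻·(x⊥)²/x⊤ − γ·x⊥ for functions p⁺, p⁻ : ℝ → ℝ and a constant γ, where also x⊤(t) ≠ 0 for all t. Then the ratio x(t) = x⊤(t)/x⊥(t) satisfies x' = p⁺ − p⁻. -/
/-- In the quotient rule for `x / y` the damping terms `-γ x` and `-γ y` cancel. -/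
theorem HasDerivAt.div_of_common_damping {𝕜 : Type*} [NontriviallyNormedField 𝕜]
    {x y : 𝕜 → 𝕜} {a b γ t : 𝕜} (hx0 : x t ≠ 0) (hy0 : y t ≠ 0)
    (hx : HasDerivAt x (a * y t - γ * x t) t)
    (hy : HasDerivAt y (b * y t ^ 2 / x t - γ * y t) t) :
    HasDerivAt (fun s => x s / y s) (a - b) t := by
  refine (hx.div hy hy0).congr_deriv ?_
  field_simp
  ring

theorem stmt_0
    (xT xB pPlus pMinus : ℝ → ℝ) (γ : ℝ)
    (hxB : ∀ t, xB t ≠ 0) (hxT : ∀ t, xT t ≠ 0)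
    (hT : ∀ t, HasDerivAt xT (pPlus t * xB t - γ * xT t) t)
    (hB : ∀ t, HasDerivAt xB (pMinus t * (xB t)^2 / xT t - γ * xB t) t) :
    ∀ t, HasDerivAt (fun s => xT s / xB s) (pPlus t - pMinus t) t :=
  fun t => (hT t).div_of_common_damping (hxT t) (hxB t) (hB t)
end

section
/- Let x⊤, x⊥ : ℝ → ℝ be differentiable with x⊥(t) ≠ 0 and x⊤(t) ≠ 0 for all t, and let β, γ be constants. Suppose (x⊤)' = β·(x⊤/x⊥) + p⁺·x⊥ − γ·x⊤ and (x⊥)' = β + p⁻·(x⊥)²/x⊤ − γ·x⊥. Then x(t) = x⊤(t)/x⊥(t) satisfies x' = p⁺ − p⁻. -/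
/-!
By the quotient rule, `(x⊤/x⊥)' = ((x⊤)' x⊥ - x⊤ (x⊥)') / x⊥²`. The production terms contribute
`β x⊤ - β x⊤` and the decay terms `-γ x⊤ x⊥ + γ x⊤ x⊥` to the numerator, so only
`(p⁺ - p⁻) x⊥²` survives.
-/

theorem HasDerivAt.fun_div_of_compensated_production {f g : ℝ → ℝ} {t β γ p q : ℝ}
    (hf : HasDerivAt f (β * (f t / g t) + p * g t - γ * f t) t)
    (hg : HasDerivAt g (β + q * g t ^ 2 / f t - γ * g t) t)
    (hgt : g t ≠ 0) (hft : f t ≠ 0) :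
    HasDerivAt (fun s => f s / g s) (p - q) t := by
  refine (hf.fun_div hg hgt).congr_deriv ?_
  field_simp
  ring

theorem stmt_1
    (xT xB pPlus pMinus : ℝ → ℝ) (β γ : ℝ)
    (hxB : ∀ t, xB t ≠ 0) (hxT : ∀ t, xT t ≠ 0)
    (hT : ∀ t, HasDerivAt xT (β * (xT t / xB t) + pPlus t * xB t - γ * xT t) t)
    (hB : ∀ t, HasDerivAt xB (β + pMinus t * (xB t)^2 / xT t - γ * xB t) t) :
    ∀ t, HasDerivAt (fun s => xT s / xB s) (pPlus t - pMinus t) t :=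
  fun t => (hT t).fun_div_of_compensated_production (hB t) (hxB t) (hxT t)
end
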